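/- arXiv:2112.01289 — 7 statements merged into one kernel-verified Lean document; each statement's English description precedes it below -/
import Mathlib

section
/- The Birget–Rhodes expansion G̃^R = {(A,g) : A a finite subset of G with {1,g} ⊆ A}, with multiplication (A,g)(B,h) = (A ∪ gB, gh), is an inverse semigroup in which the inverse of (A,g) is (g⁻¹A, g⁻¹). -/
open scoped Classical

/-- The Birget–Rhodes expansion of a group `G`: pairs `(A, g)` with `A` a finite
subset of `G` containing `1` and `g`. -/
structure BR (G : Type*) [Group G] where
  A : Finset G
  g : G
  one_mem : (1 : G) ∈ A
  g_mem : g ∈ A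

namespace BR

variable {G : Type*} [Group G] [DecidableEq G]

/-- Multiplication `(A,g)(B,h) = (A ∪ gB, gh)`. -/
def mul (x y : BR G) : BR G where
  A := x.A ∪ y.A.image (x.g * ·)
  g := x.g * y.g
  one_mem := Finset.mem_union_left _ x.one_mem
  g_mem := Finset.mem_union_right _ (Finset.mem_image_of_mem _ y.g_mem)

/-- The candidate inverse `(g⁻¹A, g⁻¹)` of `(A, g)`. -/
def inv (x : BR G) : BR G where
  A := x.A.image (x.g⁻¹ * ·)
  g := x.g⁻¹
  one_mem := by simpa using Finset.mem_image_of_mem (x.g⁻¹ * ·) x.g_mem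
  g_mem := by simpa using Finset.mem_image_of_mem (x.g⁻¹ * ·) x.one_mem

omit [DecidableEq G] in
lemma ext' {x y : BR G} (hA : x.A = y.A) (hg : x.g = y.g) : x = y := by
  cases x; cases y; simp_all

@[simp] lemma mul_A (x y : BR G) : (x.mul y).A = x.A ∪ y.A.image (x.g * ·) := rfl
@[simp] lemma mul_g (x y : BR G) : (x.mul y).g = x.g * y.g := rfl
@[simp] lemma inv_A (x : BR G) : x.inv.A = x.A.image (x.g⁻¹ * ·) := rfl
@[simp] lemma inv_g (x : BR G) : x.inv.g = x.g⁻¹ := rfl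

end BR

/-- the Birget–Rhodes expansion `G̃^R` with multiplication
`(A,g)(B,h) = (A ∪ gB, gh)` is an inverse semigroup, in which the (unique)
inverse of `(A,g)` is `(g⁻¹A, g⁻¹)`. -/
theorem stmt1 {G : Type*} [Group G] [DecidableEq G] :
    (∀ x y z : BR G, (x.mul y).mul z = x.mul (y.mul z)) ∧
    (∀ x : BR G, (x.mul x.inv).mul x = x ∧ (x.inv.mul x).mul x.inv = x.inv) ∧
    (∀ x y : BR G, (x.mul y).mul x = x → (y.mul x).mul y = y → y = x.inv) := by
  refine ⟨?_, ?_, ?_⟩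
  · intro x y z
    refine BR.ext' ?_ (mul_assoc _ _ _)
    simp only [BR.mul_A, BR.mul_g, Finset.image_union, Finset.image_image,
      Finset.union_assoc, Function.comp_def, mul_assoc]
  · intro x
    constructor
    · refine BR.ext' ?_ (by simp)
      simp only [BR.mul_A, BR.mul_g, BR.inv_A, BR.inv_g, Finset.image_image,
        Function.comp_def, mul_inv_cancel_left, mul_inv_cancel, one_mul,
        Finset.image_id', Finset.image_id, Finset.union_self]
    · refine BR.ext' ?_ (by simp)
      simp only [BR.mul_A, BR.mul_g, BR.inv_A, BR.inv_g, Finset.image_image,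
        Function.comp_def, inv_mul_cancel_left, inv_mul_cancel, one_mul,
        Finset.image_id', Finset.image_id, Finset.union_self]
  · intro x y h1 h2
    have hg : y.g = x.g⁻¹ := by
      have h := congrArg BR.g h1
      simp only [BR.mul_g] at h
      have h' : x.g * y.g = 1 := mul_right_cancel (b := x.g) (by simpa using h)
      exact (inv_eq_of_mul_eq_one_right h').symm
    refine BR.ext' ?_ hg
    have hA1 : Finset.image (x.g * ·) y.A ⊆ x.A := by
      intro a ha
      have h := congrArg BR.A h1
      rw [← h]
      simp only [BR.mul_A]
      exact Finset.mem_union_left _ (Finset.mem_union_right _ ha)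
    have hA2 : Finset.image (y.g * ·) x.A ⊆ y.A := by
      intro a ha
      have h := congrArg BR.A h2
      rw [← h]
      simp only [BR.mul_A]
      exact Finset.mem_union_left _ (Finset.mem_union_right _ ha)
    simp only [BR.inv_A]
    apply Finset.Subset.antisymm
    · intro a ha
      have h1' : x.g * a ∈ x.A := hA1 (Finset.mem_image_of_mem _ ha)
      have := Finset.mem_image_of_mem (x.g⁻¹ * ·) h1'
      simpa using this
    · intro a ha
      simp only [Finset.mem_image] at ha
      obtain ⟨b, hb, rfl⟩ := ha
      rw [← hg]
      exact hA2 (Finset.mem_image_of_mem _ hb)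
end

section
/- Let θ: G → S be a unital premorphism into an inverse semigroup S, and L a subsemilattice of P*(G) such that E(S) is (L,θ)-meet complete. Then θ(g) · I_B = I_{gB} · θ(g) for all g ∈ G and B ∈ L, where I_A = ⋀_{a∈A} θ(a)θ(a)⁻¹. -/
/-- An inverse monoid. -/
class InverseMonoid (S : Type*) extends Monoid S, Inv S where
  mul_inv_mul : ∀ a : S, a * a⁻¹ * a = a
  inv_mul_inv : ∀ a : S, a⁻¹ * a * a⁻¹ = a⁻¹
  inv_unique : ∀ a b : S, a * b * a = a → b * a * b = b → b = a⁻¹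

/-- A unital premorphism from a group to an inverse monoid. -/
def IsUnitalPremorphism {G S : Type*} [Group G] [InverseMonoid S] (θ : G → S) : Prop :=
  θ 1 = 1 ∧ (∀ g : G, θ g⁻¹ = (θ g)⁻¹) ∧
    ∀ g h : G, θ g⁻¹ * θ g * θ h = θ g⁻¹ * θ (g * h)

/-- The natural partial order on an inverse monoid: `s ≤ t` iff `s = e * t`
for some idempotent `e`. -/
def natLe {S : Type*} [InverseMonoid S] (s t : S) : Prop :=
  ∃ e : S, e * e = e ∧ s = e * t

/-- `m` is the meet (greatest lower bound) of `X` with respect to the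
natural partial order. -/
def IsMeet {S : Type*} [InverseMonoid S] (X : Set S) (m : S) : Prop :=
  (∀ x ∈ X, natLe m x) ∧ ∀ b : S, (∀ x ∈ X, natLe b x) → natLe b m

/-- The family `{θ(a)θ(a)⁻¹ : a ∈ A}` of idempotents. -/
def thFam {G S : Type*} [Group G] [InverseMonoid S] (θ : G → S) (A : Set G) : Set S :=
  (fun a => θ a * (θ a)⁻¹) '' A

namespace IMAux
variable {S : Type*} [InverseMonoid S]

lemma mii (a : S) : a * a⁻¹ * a = a := InverseMonoid.mul_inv_mul a
lemma imi (a : S) : a⁻¹ * a * a⁻¹ = a⁻¹ := InverseMonoid.inv_mul_inv a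

lemma inv_invol (a : S) : a⁻¹⁻¹ = a :=
  (InverseMonoid.inv_unique a⁻¹ a (imi a) (mii a)).symm

lemma idem_aa (a : S) : (a * a⁻¹) * (a * a⁻¹) = a * a⁻¹ := by
  rw [← mul_assoc, mii]

lemma idem_ia (a : S) : (a⁻¹ * a) * (a⁻¹ * a) = a⁻¹ * a := by
  rw [← mul_assoc, imi]

lemma idem_inv {e : S} (he : e * e = e) : e⁻¹ = e :=
  (InverseMonoid.inv_unique e e (by rw [he, he]) (by rw [he, he])).symm

/-- product of idempotents is idempotent -/
lemma mul_idem {e f : S} (he : e * e = e) (hf : f * f = f) :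
    (e * f) * (e * f) = e * f := by
  set x := (e * f)⁻¹ with hxdef
  have hx1 : (e * f) * x * (e * f) = e * f := mii _
  have hx2 : x * (e * f) * x = x := imi _
  have hx2' : ∀ y : S, x * (e * (f * (x * y))) = x * y := by
    intro y
    have := congrArg (· * y) hx2
    simpa only [mul_assoc] using this
  have he' : ∀ y : S, e * (e * y) = e * y := fun y => by rw [← mul_assoc, he]
  have hf' : ∀ y : S, f * (f * y) = f * y := fun y => by rw [← mul_assoc, hf]
  have hfxe : f * x * e = x := by
    refine ((InverseMonoid.inv_unique (e * f) (f * x * e) ?_ ?_).trans hxdef.symm)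
    · simp only [mul_assoc, he', hf']
      simpa only [mul_assoc] using hx1
    · simp only [mul_assoc, he', hf']
      rw [hx2' e]
  have hfxe' : f * (x * e) = x := by simpa only [mul_assoc] using hfxe
  have hxx : x * x = x := by
    calc x * x = (f * (x * e)) * (f * (x * e)) := by rw [hfxe']
    _ = f * (x * (e * (f * (x * e)))) := by simp only [mul_assoc]
    _ = f * (x * e) := by rw [hx2' e]
    _ = x := hfxe'
  have hef : e * f = x := by
    calc e * f = (e * f)⁻¹⁻¹ := (inv_invol _).symm
    _ = x⁻¹ := by rw [← hxdef]
    _ = x := idem_inv hxx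
  rw [hef, hxx]

/-- idempotents commute -/
lemma idem_comm {e f : S} (he : e * e = e) (hf : f * f = f) : e * f = f * e := by
  have hef := mul_idem he hf
  have hfe := mul_idem hf he
  have h1 : (e * f) * (f * e) * (e * f) = e * f := by
    have : (e * f) * (f * e) * (e * f) = (e * (f * f)) * (e * (e * f)) := by
      simp only [mul_assoc]
    rw [this, hf, ← mul_assoc e e f, he]
    exact hef
  have h2 : (f * e) * (e * f) * (f * e) = f * e := by
    have : (f * e) * (e * f) * (f * e) = (f * (e * e)) * (f * (f * e)) := by
      simp only [mul_assoc]
    rw [this, he, ← mul_assoc f f e, hf]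
    exact hfe
  have : f * e = (e * f)⁻¹ := InverseMonoid.inv_unique (e * f) (f * e) h1 h2
  rw [this, idem_inv hef]

lemma idem_commL {e f : S} (he : e * e = e) (hf : f * f = f) (y : S) :
    e * (f * y) = f * (e * y) := by
  rw [← mul_assoc, idem_comm he hf, mul_assoc]

lemma mul_inv_rev' (a b : S) : (a * b)⁻¹ = b⁻¹ * a⁻¹ := by
  refine (InverseMonoid.inv_unique (a * b) (b⁻¹ * a⁻¹) ?_ ?_).symm
  · have : (a * b) * (b⁻¹ * a⁻¹) * (a * b) = a * ((b * b⁻¹) * ((a⁻¹ * a) * b)) := by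
      simp only [mul_assoc]
    rw [this, ← mul_assoc (b * b⁻¹), idem_comm (idem_aa b) (idem_ia a)]
    simp only [mul_assoc]
    rw [← mul_assoc b b⁻¹ b, mii b, ← mul_assoc a⁻¹ a b, ← mul_assoc a (a⁻¹ * a) b,
      ← mul_assoc a a⁻¹ a, mii]
  · have : (b⁻¹ * a⁻¹) * (a * b) * (b⁻¹ * a⁻¹) = b⁻¹ * ((a⁻¹ * a) * ((b * b⁻¹) * a⁻¹)) := by
      simp only [mul_assoc]
    rw [this, ← mul_assoc (a⁻¹ * a), idem_comm (idem_ia a) (idem_aa b)]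
    simp only [mul_assoc]
    rw [← mul_assoc a⁻¹ a a⁻¹, imi a, ← mul_assoc b b⁻¹ a⁻¹, ← mul_assoc b⁻¹ (b * b⁻¹) a⁻¹,
      ← mul_assoc b⁻¹ b b⁻¹, imi]

lemma natLe_refl (s : S) : natLe s s := ⟨s * s⁻¹, idem_aa s, (mii s).symm⟩

lemma le_iff_left {s t : S} : natLe s t ↔ s = (s * s⁻¹) * t := by
  constructor
  · rintro ⟨e, he, hs⟩
    have hsinv : s⁻¹ = t⁻¹ * e := by rw [hs, mul_inv_rev', idem_inv he]
    have hss : s * s⁻¹ = e * (t * t⁻¹) := by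
      rw [hs, mul_inv_rev', idem_inv he]
      calc e * t * (t⁻¹ * e) = e * ((t * t⁻¹) * e) := by simp only [mul_assoc]
      _ = e * (e * (t * t⁻¹)) := by rw [idem_comm (idem_aa t) he]
      _ = (e * e) * (t * t⁻¹) := by rw [mul_assoc]
      _ = e * (t * t⁻¹) := by rw [he]
    rw [hss, mul_assoc, mii]
    exact hs
  · intro h
    exact ⟨s * s⁻¹, idem_aa s, h⟩

lemma le_of_right {s t f : S} (hf : f * f = f) (h : s = t * f) : natLe s t := by
  have hsinv : s⁻¹ = f * t⁻¹ := by rw [h, mul_inv_rev', idem_inv hf]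
  rw [le_iff_left]
  have hss : s * s⁻¹ = t * (f * t⁻¹) := by
    rw [h, mul_inv_rev', idem_inv hf]
    calc t * f * (f * t⁻¹) = t * ((f * f) * t⁻¹) := by simp only [mul_assoc]
    _ = t * (f * t⁻¹) := by rw [hf]
  rw [hss]
  calc s = t * f := h
  _ = (t * t⁻¹ * t) * f := by rw [mii]
  _ = t * ((t⁻¹ * t) * f) := by simp only [mul_assoc]
  _ = t * (f * (t⁻¹ * t)) := by rw [idem_comm (idem_ia t) hf]
  _ = t * (f * t⁻¹) * t := by simp only [mul_assoc]

lemma le_right {s t : S} (h : natLe s t) : s = t * (s⁻¹ * s) := by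
  obtain ⟨e, he, hs⟩ := h
  have hsinv : s⁻¹ = t⁻¹ * e := by rw [hs, mul_inv_rev', idem_inv he]
  have hss : s⁻¹ * s = t⁻¹ * (e * t) := by
    rw [hs, mul_inv_rev', idem_inv he]
    calc t⁻¹ * e * (e * t) = t⁻¹ * ((e * e) * t) := by simp only [mul_assoc]
    _ = t⁻¹ * (e * t) := by rw [he]
  rw [hss, hs]
  calc e * t = e * (t * t⁻¹ * t) := by rw [mii]
  _ = (e * (t * t⁻¹)) * t := by simp only [mul_assoc]
  _ = ((t * t⁻¹) * e) * t := by rw [idem_comm he (idem_aa t)]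
  _ = t * (t⁻¹ * (e * t)) := by simp only [mul_assoc]

lemma natLe_trans {s t u : S} (h1 : natLe s t) (h2 : natLe t u) : natLe s u := by
  obtain ⟨e, he, hs⟩ := h1
  obtain ⟨f, hf, ht⟩ := h2
  exact ⟨e * f, mul_idem he hf, by rw [hs, ht, mul_assoc]⟩

lemma natLe_antisymm {s t : S} (h1 : natLe s t) (h2 : natLe t s) : s = t := by
  obtain ⟨f, hf, hs⟩ := h1
  obtain ⟨e, he, ht⟩ := h2
  have hsf : s = f * (e * s) := by rw [← ht, ← hs]
  have key : t = s := by
    calc t = e * s := ht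
    _ = e * (f * (e * s)) := by rw [← hsf]
    _ = e * (e * (f * s)) := by rw [idem_commL hf he]
    _ = (e * e) * (f * s) := by rw [← mul_assoc]
    _ = e * (f * s) := by rw [he]
    _ = f * (e * s) := idem_commL he hf s
    _ = f * t := by rw [← ht]
    _ = s := hs.symm
  exact key.symm

lemma natLe_mul_left {s t : S} (u : S) (h : natLe s t) : natLe (u * s) (u * t) := by
  have hs := le_right h
  have hh : u * s = (u * t) * (s⁻¹ * s) := by
    conv_lhs => rw [hs]
    rw [mul_assoc]
  exact le_of_right (idem_ia s) hh

lemma natLe_mul_right {s t : S} (u : S) (h : natLe s t) : natLe (s * u) (t * u) := by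
  obtain ⟨e, he, hs⟩ := h
  exact ⟨e, he, by rw [hs, mul_assoc]⟩

lemma natLe_aa {s t : S} (h : natLe s t) : natLe (s * s⁻¹) (t * t⁻¹) := by
  obtain ⟨e, he, hs⟩ := h
  refine ⟨e, he, ?_⟩
  rw [hs, mul_inv_rev', idem_inv he]
  calc e * t * (t⁻¹ * e) = e * ((t * t⁻¹) * e) := by simp only [mul_assoc]
  _ = e * (e * (t * t⁻¹)) := by rw [idem_comm (idem_aa t) he]
  _ = (e * e) * (t * t⁻¹) := by rw [mul_assoc]
  _ = e * (t * t⁻¹) := by rw [he]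

end IMAux

open IMAux in
/-- if `θ : G → S` is a unital premorphism and `L` a subsemilattice of
`P*(G)`, closed under translation, such that `E(S)` is `(L,θ)`-meet complete, then
`θ(g) · I_B = I_{gB} · θ(g)` for all `g ∈ G` and `B ∈ L`. -/
theorem stmt6 {G S : Type*} [Group G] [InverseMonoid S] (θ : G → S)
    (hθ : IsUnitalPremorphism θ)
    (L : Set (Set G))
    (hne : ∀ A ∈ L, A.Nonempty)
    (hunion : ∀ A ∈ L, ∀ B ∈ L, A ∪ B ∈ L)
    (htrans : ∀ g : G, ∀ B ∈ L, (fun b => g * b) '' B ∈ L)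
    (hmc : ∀ A ∈ L, ∃ m : S, IsMeet (thFam θ A) m) :
    ∀ g : G, ∀ B ∈ L, ∀ mB mgB : S,
      IsMeet (thFam θ B) mB → IsMeet (thFam θ ((fun b => g * b) '' B)) mgB →
      θ g * mB = mgB * θ g := by
  obtain ⟨h1, hinv, hpre⟩ := hθ
  -- θ g * θ b ≤ θ (g*b)
  have prem_le : ∀ g b : G, θ g * θ b = (θ g * (θ g)⁻¹) * θ (g * b) := by
    intro g b
    calc θ g * θ b = (θ g * (θ g)⁻¹ * θ g) * θ b := by rw [mii]
    _ = θ g * ((θ g)⁻¹ * θ g * θ b) := by simp only [mul_assoc]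
    _ = θ g * (θ g⁻¹ * θ g * θ b) := by rw [hinv]
    _ = θ g * (θ g⁻¹ * θ (g * b)) := by rw [hpre]
    _ = θ g * ((θ g)⁻¹ * θ (g * b)) := by rw [hinv]
    _ = (θ g * (θ g)⁻¹) * θ (g * b) := by rw [← mul_assoc]
  -- conjugation: θ g * e_b * (θ g)⁻¹ ≤ e_{gb}
  have conj_le : ∀ g b : G,
      natLe (θ g * (θ b * (θ b)⁻¹) * (θ g)⁻¹) (θ (g * b) * (θ (g * b))⁻¹) := by
    intro g b
    have key : θ g * (θ b * (θ b)⁻¹) * (θ g)⁻¹ = (θ g * θ b) * (θ g * θ b)⁻¹ := by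
      rw [mul_inv_rev']
      simp only [mul_assoc]
    rw [key]
    exact natLe_aa ⟨θ g * (θ g)⁻¹, idem_aa _, prem_le g b⟩
  intro g B hB mB mgB hmB hmgB
  obtain ⟨b0, hb0⟩ := hne B hB
  -- mB and mgB are idempotent
  have idem_of_meet : ∀ (A : Set G) (m : S), A.Nonempty → IsMeet (thFam θ A) m →
      m * m = m := by
    rintro A m ⟨a, ha⟩ hm
    have hle : natLe m (θ a * (θ a)⁻¹) := hm.1 _ ⟨a, ha, rfl⟩
    obtain ⟨c, hc, hm⟩ := hle
    rw [hm]
    exact mul_idem hc (idem_aa (θ a))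
  have hmBi : mB * mB = mB := idem_of_meet B mB ⟨b0, hb0⟩ hmB
  have hmgBi : mgB * mgB = mgB := by
    exact idem_of_meet ((fun b => g * b) '' B) mgB ⟨g * b0, b0, hb0, rfl⟩ hmgB
  set u := θ g with hu
  have huinv : θ g⁻¹ = u⁻¹ := hinv g
  -- Step 1 : u * mB * u⁻¹ ≤ mgB
  have step1 : natLe (u * mB * u⁻¹) mgB := by
    refine hmgB.2 _ ?_
    rintro x ⟨gb, ⟨b, hb, rfl⟩, rfl⟩
    refine natLe_trans ?_ (conj_le g b)
    exact natLe_mul_right _ (natLe_mul_left _ (hmB.1 _ ⟨b, hb, rfl⟩))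
  -- Step 2 : u⁻¹ * mgB * u ≤ mB
  have step2 : natLe (u⁻¹ * mgB * u) mB := by
    refine hmB.2 _ ?_
    rintro x ⟨b, hb, rfl⟩
    have h1 : natLe (u⁻¹ * mgB * u) (u⁻¹ * (θ (g * b) * (θ (g * b))⁻¹) * u) := by
      exact natLe_mul_right _ (natLe_mul_left _ (hmgB.1 _ ⟨g * b, ⟨b, hb, rfl⟩, rfl⟩))
    refine natLe_trans h1 ?_
    have := conj_le g⁻¹ (g * b)
    rw [huinv, inv_mul_cancel_left, inv_invol] at this
    exact this
  -- transfer
  have left_le : natLe (u * mB) (mgB * u) := by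
    have := natLe_mul_right u step1
    have key : u * mB * u⁻¹ * u = u * mB := by
      calc u * mB * u⁻¹ * u = u * (mB * (u⁻¹ * u)) := by simp only [mul_assoc]
      _ = u * ((u⁻¹ * u) * mB) := by rw [idem_comm hmBi (idem_ia u)]
      _ = (u * u⁻¹ * u) * mB := by simp only [mul_assoc]
      _ = u * mB := by rw [mii]
    rwa [key] at this
  have right_le : natLe (mgB * u) (u * mB) := by
    have := natLe_mul_left u step2
    have key : u * (u⁻¹ * mgB * u) = mgB * u := by
      calc u * (u⁻¹ * mgB * u) = ((u * u⁻¹) * mgB) * u := by simp only [mul_assoc]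
      _ = (mgB * (u * u⁻¹)) * u := by rw [idem_comm (idem_aa u) hmgBi]
      _ = mgB * (u * u⁻¹ * u) := by simp only [mul_assoc]
      _ = mgB * u := by rw [mii]
    rwa [key] at this
  exact natLe_antisymm left_le right_le
end

section
/- Let X be a locally compact Hausdorff space, M a topological space, and h: M → C_od(X) a map. Then h is continuous for the compact-open topology if and only if M * X = {(m,x) : x ∈ dom(h(m))} is open in M × X and the map (m,x) ↦ h(m)(x) from M * X to X is continuous. -/
/-- A continuous partial function on open domain from `X` to `Y`. -/
structure Cod (X Y : Type*) [TopologicalSpace X] [TopologicalSpace Y] where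
  dom : Set X
  domOpen : IsOpen dom
  toFun : dom → Y
  cont : Continuous toFun

variable {X Y : Type*} [TopologicalSpace X] [TopologicalSpace Y]

/-- The subbasic set `⟨K;V⟩ = {f : K ⊆ dom f and f(K) ⊆ V}`. -/
def codBasic (K : Set X) (V : Set Y) : Set (Cod X Y) :=
  {f | ∃ h : K ⊆ f.dom, ∀ x (hx : x ∈ K), f.toFun ⟨x, h hx⟩ ∈ V}

/-- The compact-open topology on `Cod X Y`, generated by the sets `⟨K;V⟩`
with `K` compact and `V` open. -/
def codTop (X Y : Type*) [TopologicalSpace X] [TopologicalSpace Y] :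
    TopologicalSpace (Cod X Y) :=
  .generateFrom {s | ∃ K V, IsCompact K ∧ IsOpen V ∧ s = codBasic K V}

/-- `g` is a restriction of `f`. -/
def CodRestricts (g f : Cod X Y) : Prop :=
  ∃ h : g.dom ⊆ f.dom, ∀ x (hx : x ∈ g.dom), g.toFun ⟨x, hx⟩ = f.toFun ⟨x, h hx⟩

/-- for `X` locally compact Hausdorff, a map `h : M → C_od(X)` is
continuous for the compact-open topology iff `M * X = {(m,x) : x ∈ dom (h m)}`
is open in `M × X` and `(m,x) ↦ h(m)(x)` is continuous on `M * X`. -/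
theorem stmt11 {X M : Type*} [TopologicalSpace X] [T2Space X] [LocallyCompactSpace X]
    [TopologicalSpace M] (h : M → Cod X X) :
    @Continuous M (Cod X X) _ (codTop X X) h ↔
      (IsOpen {p : M × X | p.2 ∈ (h p.1).dom} ∧
       Continuous (fun q : {p : M × X // p.2 ∈ (h p.1).dom} =>
         (h q.1.1).toFun ⟨q.1.2, q.2⟩)) := by
  constructor
  · intro hc
    have hsub : ∀ K V, IsCompact K → IsOpen V → IsOpen (h ⁻¹' codBasic K V) := by
      intro K V hK hV
      have hgen : @IsOpen _ (codTop X X) (codBasic K V) :=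
        TopologicalSpace.GenerateOpen.basic _ ⟨K, V, hK, hV, rfl⟩
      exact @Continuous.isOpen_preimage M (Cod X X) _ (codTop X X) h hc _ hgen
    constructor
    · rw [isOpen_iff_forall_mem_open]
      rintro ⟨m, x⟩ hx
      obtain ⟨K, hKc, hxK, hKd⟩ := exists_compact_subset (h m).domOpen hx
      refine ⟨(h ⁻¹' codBasic K Set.univ) ×ˢ interior K, ?_,
        (hsub K _ hKc isOpen_univ).prod isOpen_interior,
        ⟨⟨hKd, fun _ _ => Set.mem_univ _⟩, hxK⟩⟩
      rintro ⟨m', x'⟩ ⟨⟨hKd', -⟩, hx'⟩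
      exact hKd' (interior_subset hx')
    · rw [continuous_def]
      intro V hV
      rw [isOpen_iff_forall_mem_open]
      rintro ⟨⟨m, x⟩, hx⟩ hmem
      obtain ⟨W', hW', hWp⟩ := isOpen_induced_iff.mp ((h m).cont.isOpen_preimage V hV)
      have hxW : x ∈ W' ∩ (h m).dom := by
        refine ⟨?_, hx⟩
        have : (⟨x, hx⟩ : (h m).dom) ∈ Subtype.val ⁻¹' W' := by rw [hWp]; exact hmem
        exact this
      obtain ⟨K, hKc, hxK, hKW⟩ := exists_compact_subset (hW'.inter (h m).domOpen) hxW
      refine ⟨Subtype.val ⁻¹' ((h ⁻¹' codBasic K V) ×ˢ interior K), ?_, ?_, ?_⟩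
      · rintro ⟨⟨m', x'⟩, hx'⟩ ⟨⟨hKd', hKV'⟩, hxi⟩
        exact hKV' x' (interior_subset hxi)
      · exact ((hsub K V hKc hV).prod isOpen_interior).preimage continuous_subtype_val
      · refine ⟨⟨fun y hy => (hKW hy).2, fun y hy => ?_⟩, hxK⟩
        have : (⟨y, (hKW hy).2⟩ : (h m).dom) ∈ Subtype.val ⁻¹' W' := (hKW hy).1
        rw [hWp] at this
        exact this
  · rintro ⟨hD, hE⟩
    have : @Continuous M (Cod X X) _
        (.generateFrom {s | ∃ K V, IsCompact K ∧ IsOpen V ∧ s = codBasic K V}) h := by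
      rw [continuous_generateFrom_iff]
      rintro s ⟨K, V, hK, hV, rfl⟩
      have hΩ : IsOpen {p : M × X | ∃ hp : p.2 ∈ (h p.1).dom, (h p.1).toFun ⟨p.2, hp⟩ ∈ V} := by
        have h1 := hD.isOpenMap_subtype_val _ (hE.isOpen_preimage V hV)
        convert h1 using 1
        ext p
        constructor
        · rintro ⟨hp, hpv⟩; exact ⟨⟨p, hp⟩, hpv, rfl⟩
        · rintro ⟨⟨q, hq⟩, hqv, rfl⟩; exact ⟨hq, hqv⟩
      rw [isOpen_iff_forall_mem_open]
      rintro m ⟨hKd, hKV⟩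
      have hsub : {m} ×ˢ K ⊆
          {p : M × X | ∃ hp : p.2 ∈ (h p.1).dom, (h p.1).toFun ⟨p.2, hp⟩ ∈ V} := by
        rintro ⟨m', x⟩ ⟨hm', hx⟩
        rcases hm' with rfl
        exact ⟨hKd hx, hKV x hx⟩
      obtain ⟨U, W, hU, hW, hmU, hKW, hUW⟩ :=
        generalized_tube_lemma isCompact_singleton hK hΩ hsub
      refine ⟨U, ?_, hU, hmU rfl⟩
      intro m' hm'
      have key : ∀ x (hx : x ∈ K), ∃ hd : x ∈ (h m').dom, (h m').toFun ⟨x, hd⟩ ∈ V :=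
        fun x hx => hUW (Set.mk_mem_prod hm' (hKW hx))
      exact ⟨fun x hx => (key x hx).1, fun x hx => (key x hx).2⟩
    exact this
end

section
/- Let X be a locally compact Hausdorff space and Γ(X) the inverse semigroup of partial homeomorphisms between open subsets of X, with any Hausdorff inverse semigroup topology τ extending the topology τ_ico (generated by ⟨K;V⟩ and ⟨K;V⟩⁻¹). Then the map D: Γ(X) → CL(X), D(f) = X \ dom(f), is continuous when CL(X) carries the Fell topology. -/
set_option linter.unusedTactic false

/-- A partial homeomorphism of `X`: a homeomorphism between open subsets
`dom` and `im` of `X`, normalized to be the identity outside its domain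
(so that equality of `PGamma`s corresponds to equality of partial maps). -/
structure PGamma (X : Type*) [TopologicalSpace X] where
  dom : Set X
  im : Set X
  toFun : X → X
  invFun : X → X
  domOpen : IsOpen dom
  imOpen : IsOpen im
  mapsTo : Set.MapsTo toFun dom im
  invMapsTo : Set.MapsTo invFun im dom
  leftInv : ∀ x ∈ dom, invFun (toFun x) = x
  rightInv : ∀ y ∈ im, toFun (invFun y) = y
  contOn : ContinuousOn toFun dom
  invContOn : ContinuousOn invFun im
  toFun_id : ∀ x, x ∉ dom → toFun x = x
  invFun_id : ∀ y, y ∉ im → invFun y = y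

namespace PGamma

variable {X : Type*} [TopologicalSpace X]

open Classical in
/-- Composition of partial homeomorphisms (`comp f g = f ∘ g` on the largest
domain where it makes sense). -/
noncomputable def comp (f g : PGamma X) : PGamma X where
  dom := g.dom ∩ g.toFun ⁻¹' f.dom
  im := f.im ∩ f.invFun ⁻¹' g.im
  toFun := fun x => if x ∈ g.dom ∩ g.toFun ⁻¹' f.dom then f.toFun (g.toFun x) else x
  invFun := fun y => if y ∈ f.im ∩ f.invFun ⁻¹' g.im then g.invFun (f.invFun y) else y
  domOpen := g.contOn.isOpen_inter_preimage g.domOpen f.domOpen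
  imOpen := f.invContOn.isOpen_inter_preimage f.imOpen g.imOpen
  mapsTo := fun x hx => by
    beta_reduce
    rw [if_pos hx]
    exact ⟨f.mapsTo hx.2, by
      simp only [Set.mem_preimage]
      rw [f.leftInv _ hx.2]; exact g.mapsTo hx.1⟩
  invMapsTo := fun y hy => by
    beta_reduce
    rw [if_pos hy]
    exact ⟨g.invMapsTo hy.2, by
      simp only [Set.mem_preimage]
      rw [g.rightInv _ hy.2]; exact f.invMapsTo hy.1⟩
  leftInv := fun x hx => by
    beta_reduce
    rw [if_pos hx]
    beta_reduce
    rw [if_pos]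
    · rw [f.leftInv _ hx.2]; exact g.leftInv _ hx.1
    · exact ⟨f.mapsTo hx.2, by
        simp only [Set.mem_preimage]
        rw [f.leftInv _ hx.2]; exact g.mapsTo hx.1⟩
  rightInv := fun y hy => by
    beta_reduce
    rw [if_pos hy]
    beta_reduce
    rw [if_pos]
    · rw [g.rightInv _ hy.2]; exact f.rightInv _ hy.1
    · exact ⟨g.invMapsTo hy.2, by
        simp only [Set.mem_preimage]
        rw [g.rightInv _ hy.2]; exact f.invMapsTo hy.1⟩
  contOn := by
    have h1 : ContinuousOn (fun x => f.toFun (g.toFun x)) (g.dom ∩ g.toFun ⁻¹' f.dom) :=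
      f.contOn.comp (g.contOn.mono Set.inter_subset_left) (fun x hx => hx.2)
    exact h1.congr (fun x hx => if_pos hx)
  invContOn := by
    have h1 : ContinuousOn (fun y => g.invFun (f.invFun y)) (f.im ∩ f.invFun ⁻¹' g.im) :=
      g.invContOn.comp (f.invContOn.mono Set.inter_subset_left) (fun y hy => hy.2)
    exact h1.congr (fun y hy => if_pos hy)
  toFun_id := fun x hx => if_neg hx
  invFun_id := fun y hy => if_neg hy
/-- The inverse of a partial homeomorphism. -/
def inv (f : PGamma X) : PGamma X where
  dom := f.im
  im := f.dom
  toFun := f.invFun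
  invFun := f.toFun
  domOpen := f.imOpen
  imOpen := f.domOpen
  mapsTo := f.invMapsTo
  invMapsTo := f.mapsTo
  leftInv := f.rightInv
  rightInv := f.leftInv
  contOn := f.invContOn
  invContOn := f.contOn
  toFun_id := f.invFun_id
  invFun_id := f.toFun_id

/-- The identity on an open set `V`, an idempotent of `Γ(X)`. -/
def idOn (V : Set X) (hV : IsOpen V) : PGamma X where
  dom := V
  im := V
  toFun := id
  invFun := id
  domOpen := hV
  imOpen := hV
  mapsTo := fun _ hx => hx
  invMapsTo := fun _ hx => hx
  leftInv := fun _ _ => rfl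
  rightInv := fun _ _ => rfl
  contOn := continuous_id.continuousOn
  invContOn := continuous_id.continuousOn
  toFun_id := fun _ _ => rfl
  invFun_id := fun _ _ => rfl

end PGamma

/-- The closed subsets of `X`. -/
abbrev Cl (X : Type*) [TopologicalSpace X] := {A : Set X // IsClosed A}

/-- The Fell topology on the closed subsets of `X`: subbasic sets are
`V⁻ = {A : A ∩ V ≠ ∅}` for `V` open, and `W⁺ = {A : A ⊆ W}` for `W` open
with compact complement. -/
instance fellTop (X : Type*) [TopologicalSpace X] : TopologicalSpace (Cl X) :=
  .generateFrom ({s | ∃ V : Set X, IsOpen V ∧ s = {A : Cl X | (A.1 ∩ V).Nonempty}} ∪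
    {s | ∃ W : Set X, IsOpen W ∧ IsCompact Wᶜ ∧ s = {A : Cl X | A.1 ⊆ W}})

variable {X : Type*} [TopologicalSpace X]

/-- `D(f) = X \ dom f`. -/
def Dmap (f : PGamma X) : Cl X := ⟨f.domᶜ, f.domOpen.isClosed_compl⟩

/-- `I(f) = X \ im f`. -/
def Imap (f : PGamma X) : Cl X := ⟨f.imᶜ, f.imOpen.isClosed_compl⟩

/-- The subbasic set `⟨K;V⟩ = {f ∈ Γ(X) : K ⊆ dom f, f(K) ⊆ V}`. -/
def gBasic (K V : Set X) : Set (PGamma X) :=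
  {f | K ⊆ f.dom ∧ f.toFun '' K ⊆ V}

/-- The subbasis of the topology `τ_ico`: the sets `⟨K;V⟩` and `⟨K;V⟩⁻¹`,
for `K` compact and `V` open. -/
def icoSubbasis (X : Type*) [TopologicalSpace X] : Set (Set (PGamma X)) :=
  {s | ∃ K V : Set X, IsCompact K ∧ IsOpen V ∧
    (s = gBasic K V ∨ s = PGamma.inv ⁻¹' gBasic K V)}

/-- The topology `τ_ico` on `Γ(X)`. -/
def icoTop (X : Type*) [TopologicalSpace X] : TopologicalSpace (PGamma X) :=
  .generateFrom (icoSubbasis X)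

theorem PGamma.ext' {f g : PGamma X} (h1 : f.dom = g.dom) (h2 : f.im = g.im)
    (h3 : f.toFun = g.toFun) (h4 : f.invFun = g.invFun) : f = g := by
  cases f; cases g; simp_all

theorem PGamma.inv_comp_self (f : PGamma X) :
    f.inv.comp f = PGamma.idOn f.dom f.domOpen := by
  have hdom : f.dom ∩ f.toFun ⁻¹' f.im = f.dom := by
    apply Set.inter_eq_left.mpr
    intro x hx; exact f.mapsTo hx
  classical
  apply PGamma.ext'
  · exact hdom
  · exact hdom
  · funext x
    show (if x ∈ f.dom ∩ f.toFun ⁻¹' f.im then f.invFun (f.toFun x) else x) = x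
    split
    · next h => exact f.leftInv _ h.1
    · rfl
  · funext y
    show (if y ∈ f.dom ∩ f.toFun ⁻¹' f.im then f.invFun (f.toFun y) else y) = y
    split
    · next h => exact f.leftInv _ h.1
    · rfl

theorem PGamma.idOn_comp_idOn {U V : Set X} (hU : IsOpen U) (hV : IsOpen V) :
    (PGamma.idOn U hU).comp (PGamma.idOn V hV) =
      PGamma.idOn (V ∩ U) (hV.inter hU) := by
  classical
  apply PGamma.ext'
  · show V ∩ id ⁻¹' U = V ∩ U; rfl
  · show U ∩ id ⁻¹' V = V ∩ U
    rw [Set.preimage_id, Set.inter_comm]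
  · funext x
    show (if x ∈ V ∩ id ⁻¹' U then id (id x) else x) = id x
    split <;> rfl
  · funext x
    show (if x ∈ U ∩ id ⁻¹' V then id (id x) else x) = id x
    split <;> rfl

theorem PGamma.idOn_inj {U V : Set X} {hU : IsOpen U} {hV : IsOpen V}
    (h : PGamma.idOn U hU = PGamma.idOn V hV) : U = V :=
  congrArg PGamma.dom h

/-- for `X` locally compact Hausdorff and any Hausdorff inverse
semigroup topology `τ` on `Γ(X)` extending `τ_ico`, the map
`D : Γ(X) → CL(X)`, `D(f) = X \ dom f`, is continuous for the Fell topology. -/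
theorem stmt13 {X : Type*} [TopologicalSpace X] [T2Space X] [LocallyCompactSpace X]
    (τ : TopologicalSpace (PGamma X))
    (hT2 : @T2Space (PGamma X) τ)
    (hmul : @Continuous (PGamma X × PGamma X) (PGamma X)
      (@instTopologicalSpaceProd _ _ τ τ) τ (fun p => p.1.comp p.2))
    (hinv : @Continuous (PGamma X) (PGamma X) τ τ PGamma.inv)
    (hext : ∀ s : Set (PGamma X), (icoTop X).IsOpen s → τ.IsOpen s) :
    @Continuous (PGamma X) (Cl X) τ (fellTop X) Dmap := by
  letI := τ
  have : @Continuous (PGamma X) (Cl X) τ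
      (TopologicalSpace.generateFrom
        ({s | ∃ V : Set X, IsOpen V ∧ s = {A : Cl X | (A.1 ∩ V).Nonempty}} ∪
         {s | ∃ W : Set X, IsOpen W ∧ IsCompact Wᶜ ∧ s = {A : Cl X | A.1 ⊆ W}})) Dmap := by
    rw [continuous_generateFrom_iff]
    rintro s (⟨V, hV, rfl⟩ | ⟨W, hW, hWc, rfl⟩)
    · -- V⁻ case
      have hF : Continuous (fun f : PGamma X => (f.inv.comp f).comp (PGamma.idOn V hV)) := by
        have h1 : Continuous (fun f : PGamma X => f.inv.comp f) :=
          hmul.comp (hinv.prodMk continuous_id)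
        exact hmul.comp (h1.prodMk continuous_const)
      have hclosed : IsClosed {f : PGamma X |
          (f.inv.comp f).comp (PGamma.idOn V hV) = PGamma.idOn V hV} := by
        haveI : T1Space (PGamma X) := hT2.t1Space
        exact isClosed_singleton.preimage hF
      have hkey : ∀ f : PGamma X,
          ((f.inv.comp f).comp (PGamma.idOn V hV) = PGamma.idOn V hV) ↔ V ⊆ f.dom := by
        intro f
        rw [f.inv_comp_self, PGamma.idOn_comp_idOn]
        constructor
        · intro h
          have := PGamma.idOn_inj h
          exact Set.inter_eq_left.mp this
        · intro h
          have hVe : V ∩ f.dom = V := Set.inter_eq_left.mpr h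
          exact PGamma.ext' hVe hVe rfl rfl
      have heq : Dmap ⁻¹' {A : Cl X | (A.1 ∩ V).Nonempty} =
          {f : PGamma X | (f.inv.comp f).comp (PGamma.idOn V hV) = PGamma.idOn V hV}ᶜ := by
        ext f
        simp only [Set.mem_preimage, Set.mem_setOf_eq, Set.mem_compl_iff, Dmap, hkey f]
        rw [Set.inter_comm, Set.inter_compl_nonempty_iff]
      rw [heq]
      exact hclosed.isOpen_compl
    · -- W⁺ case
      have heq : Dmap ⁻¹' {A : Cl X | A.1 ⊆ W} = gBasic Wᶜ Set.univ := by
        ext f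
        simp only [Set.mem_preimage, Set.mem_setOf_eq, Dmap, gBasic,
          Set.subset_univ, and_true]
        exact Set.compl_subset_comm
      rw [heq]
      apply hext
      exact TopologicalSpace.GenerateOpen.basic _
        ⟨Wᶜ, Set.univ, hWc, isOpen_univ, Or.inl rfl⟩
  exact this
end

section
/- Let X be a locally compact Hausdorff space. The map φ: CL(X) → E(Γ(X)) given by φ(K) = id_{X\K} is an isomorphism of semilattices which is a homeomorphism from the Fell topology on CL(X) to the topology τ_hco restricted to E(Γ(X)); consequently E(Γ(X)) is compact in τ_hco. -/
set_option linter.unusedTactic false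

variable {X : Type*} [TopologicalSpace X]

/-- The topology `τ_hco` on `Γ(X)`: generated by `τ_ico` together with the
preimages of Fell-open sets under `D : f ↦ X \ dom f` and `I : f ↦ X \ im f`. -/
def thcoTop (X : Type*) [TopologicalSpace X] : TopologicalSpace (PGamma X) :=
  .generateFrom (icoSubbasis X ∪
    {s | ∃ u : Set (Cl X), IsOpen u ∧ (s = Dmap ⁻¹' u ∨ s = Imap ⁻¹' u)})

/-- The map `φ : CL(X) → E(Γ(X))`, `φ(K) = id_{X \ K}`. -/
def phiId {X : Type*} [TopologicalSpace X] (A : Cl X) : PGamma X :=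
  PGamma.idOn A.1ᶜ A.2.isOpen_compl

/-! An idempotent partial homeomorphism `f` satisfies `f (f x) = f x` on its domain, and `f` is
injective there, so `f` is the identity on its domain: the idempotents are exactly the maps
`id_V`, and `φ` is a bijection onto them turning unions into compositions. Both `D` and `I`
invert `φ` and are `τ_hco`-continuous by construction, so `φ` is an embedding as soon as it is
continuous. For continuity, `φ⁻¹⟨K;V⟩` is either empty or the Fell set `{A : A ⊆ X \ K}`, which
is subbasic because a compact subset of a Hausdorff space is closed. Finally the Fell topology
is compact (Alexander's subbasis lemma), so its image `E(Γ(X))` is `τ_hco`-compact. -/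

open Topology

namespace PGamma

theorem ext_of {f g : PGamma X} (hdom : f.dom = g.dom) (him : f.im = g.im)
    (htoFun : f.toFun = g.toFun) (hinvFun : f.invFun = g.invFun) : f = g := by
  cases f; cases g; simp_all

theorem toFun_eq_self_of_comp_self {f : PGamma X} (hf : f.comp f = f) {x : X}
    (hx : x ∈ f.dom) : f.toFun x = x := by
  have hx' : x ∈ f.dom ∩ f.toFun ⁻¹' f.dom := show x ∈ (f.comp f).dom by rwa [hf]
  have hff : f.toFun (f.toFun x) = f.toFun x :=
    (if_pos hx').symm.trans (congrFun (congrArg PGamma.toFun hf) x)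
  calc f.toFun x = f.invFun (f.toFun (f.toFun x)) := (f.leftInv _ hx'.2).symm
    _ = x := by rw [hff, f.leftInv _ hx]

theorem invFun_eq_self_of_comp_self {f : PGamma X} (hf : f.comp f = f) {y : X}
    (hy : y ∈ f.im) : f.invFun y = y := by
  simpa only [toFun_eq_self_of_comp_self hf (f.invMapsTo hy)] using f.rightInv y hy

theorem im_eq_dom_of_comp_self {f : PGamma X} (hf : f.comp f = f) : f.im = f.dom := by
  refine Set.Subset.antisymm (fun y hy => ?_) (fun x hx => ?_)
  · simpa only [invFun_eq_self_of_comp_self hf hy] using f.invMapsTo hy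
  · simpa only [toFun_eq_self_of_comp_self hf hx] using f.mapsTo hx

end PGamma

theorem Dmap_phiId (A : Cl X) : Dmap (phiId A) = A := Subtype.ext (compl_compl _)

theorem Imap_phiId (A : Cl X) : Imap (phiId A) = A := Subtype.ext (compl_compl _)

theorem phiId_Dmap_of_comp_self {f : PGamma X} (hf : f.comp f = f) : phiId (Dmap f) = f := by
  refine PGamma.ext_of (compl_compl _) ?_ ?_ ?_
  · rw [PGamma.im_eq_dom_of_comp_self hf]
    exact compl_compl _
  · funext x
    by_cases hx : x ∈ f.dom
    · exact (PGamma.toFun_eq_self_of_comp_self hf hx).symm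
    · exact (f.toFun_id x hx).symm
  · funext y
    by_cases hy : y ∈ f.im
    · exact (PGamma.invFun_eq_self_of_comp_self hf hy).symm
    · exact (f.invFun_id y hy).symm

theorem phiId_union (A B : Cl X) :
    phiId (⟨A.1 ∪ B.1, A.2.union B.2⟩ : Cl X) = (phiId A).comp (phiId B) := by
  refine PGamma.ext_of ?_ ?_ ?_ ?_
  · show (A.1 ∪ B.1)ᶜ = B.1ᶜ ∩ A.1ᶜ
    rw [Set.compl_union, Set.inter_comm]
  · show (A.1 ∪ B.1)ᶜ = A.1ᶜ ∩ B.1ᶜ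
    rw [Set.compl_union]
  · funext x
    exact (ite_self x).symm
  · funext y
    exact (ite_self y).symm

theorem phiId_injective : Function.Injective (phiId (X := X)) :=
  Function.LeftInverse.injective Dmap_phiId

theorem range_phiId : Set.range (phiId (X := X)) = {f : PGamma X | f.comp f = f} := by
  ext f
  constructor
  · rintro ⟨A, rfl⟩
    show (phiId A).comp (phiId A) = phiId A
    rw [← phiId_union]
    exact congrArg phiId (Subtype.ext (Set.union_self _))
  · exact fun hf => ⟨Dmap f, phiId_Dmap_of_comp_self hf⟩

instance Cl.compactSpace : CompactSpace (Cl X) := by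
  refine compactSpace_generateFrom rfl fun P hP hcover => ?_
  -- The closed set missing every `V` with `V⁻ ∈ P` can only be covered by some `W⁺ ∈ P`.
  set 𝒱 : Set (Set X) := {V | IsOpen V ∧ {B : Cl X | (B.1 ∩ V).Nonempty} ∈ P}
  have hA : IsClosed (⋃₀ 𝒱)ᶜ := (isOpen_sUnion fun V hV => hV.1).isClosed_compl
  obtain ⟨s, hsP, hAs⟩ := Set.sUnion_eq_univ_iff.1 hcover ⟨_, hA⟩
  rcases hP hsP with ⟨V, hV, rfl⟩ | ⟨W, hW, hWc, rfl⟩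
  · obtain ⟨x, hxA, hxV⟩ := hAs
    exact absurd (Set.subset_sUnion_of_mem (show V ∈ 𝒱 from ⟨hV, hsP⟩) hxV) hxA
  · obtain ⟨𝒱', h𝒱', h𝒱'fin, hcov⟩ := hWc.elim_finite_subcover_image (b := 𝒱) (c := id)
      (fun V hV => hV.1) (by simpa [← Set.sUnion_eq_biUnion] using Set.compl_subset_comm.1 hAs)
    refine ⟨insert {B | B.1 ⊆ W} ((fun V => {B : Cl X | (B.1 ∩ V).Nonempty}) '' 𝒱'), ?_,
      (h𝒱'fin.image _).insert _, ?_⟩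
    · exact Set.insert_subset hsP (Set.image_subset_iff.2 fun V hV => (h𝒱' hV).2)
    · refine Set.eq_univ_of_forall fun B => ?_
      by_cases hBW : B.1 ⊆ W
      · exact ⟨_, Set.mem_insert _ _, hBW⟩
      · obtain ⟨x, hxB, hxW⟩ := Set.not_subset.1 hBW
        obtain ⟨V, hV, hxV⟩ := Set.mem_iUnion₂.1 (hcov hxW)
        exact ⟨_, Set.mem_insert_of_mem _ ⟨V, hV, rfl⟩, x, hxB, hxV⟩

theorem phiId_mem_gBasic {A : Cl X} {K V : Set X} :
    phiId A ∈ gBasic K V ↔ K ⊆ A.1ᶜ ∧ K ⊆ V := by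
  show K ⊆ A.1ᶜ ∧ id '' K ⊆ V ↔ _
  rw [Set.image_id]

theorem isOpen_phiId_preimage_gBasic [T2Space X] {K : Set X} (hK : IsCompact K) (V : Set X) :
    IsOpen (phiId ⁻¹' gBasic K V) := by
  by_cases hKV : K ⊆ V
  · have hmiss : phiId ⁻¹' gBasic K V = {A : Cl X | A.1 ⊆ Kᶜ} := by
      ext A
      rw [Set.mem_preimage, phiId_mem_gBasic, and_iff_left hKV]
      exact Set.subset_compl_comm
    rw [hmiss]
    exact TopologicalSpace.isOpen_generateFrom_of_mem
      (Or.inr ⟨Kᶜ, hK.isClosed.isOpen_compl, by rwa [compl_compl], rfl⟩)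
  · have hempty : phiId ⁻¹' gBasic K V = ∅ :=
      Set.eq_empty_of_forall_notMem fun A hA => hKV (phiId_mem_gBasic.1 hA).2
    rw [hempty]
    exact isOpen_empty

theorem continuous_phiId [T2Space X] : Continuous[fellTop X, thcoTop X] (phiId (X := X)) := by
  refine continuous_generateFrom_iff.2 ?_
  rintro s (⟨K, V, hK, -, rfl | rfl⟩ | ⟨u, hu, rfl | rfl⟩)
  -- `φ(A)⁻¹ = φ(A)`, so `⟨K;V⟩⁻¹` pulls back like `⟨K;V⟩`.
  · exact isOpen_phiId_preimage_gBasic hK V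
  · exact isOpen_phiId_preimage_gBasic hK V
  · rwa [← Set.preimage_comp, Function.LeftInverse.comp_eq_id Dmap_phiId, Set.preimage_id]
  · rwa [← Set.preimage_comp, Function.LeftInverse.comp_eq_id Imap_phiId, Set.preimage_id]

theorem continuous_Dmap : Continuous[thcoTop X, fellTop X] (Dmap (X := X)) :=
  continuous_def.2 fun u hu =>
    TopologicalSpace.isOpen_generateFrom_of_mem (Or.inr ⟨u, hu, Or.inl rfl⟩)

theorem stmt14_general {X : Type*} [TopologicalSpace X] [T2Space X] :
    (∀ A B : Cl X, phiId (⟨A.1 ∪ B.1, A.2.union B.2⟩ : Cl X) =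
      (phiId A).comp (phiId B)) ∧
    Function.Injective (phiId (X := X)) ∧
    Set.range (phiId (X := X)) = {f : PGamma X | f.comp f = f} ∧
    @Topology.IsEmbedding (Cl X) (PGamma X) (fellTop X) (thcoTop X) phiId ∧
    @IsCompact (PGamma X) (thcoTop X) {f : PGamma X | f.comp f = f} := by
  let _ : TopologicalSpace (PGamma X) := thcoTop X
  refine ⟨phiId_union, phiId_injective, range_phiId, ?_, ?_⟩
  · exact Function.LeftInverse.isEmbedding Dmap_phiId continuous_Dmap continuous_phiId
  · rw [← range_phiId]
    exact isCompact_range continuous_phiId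

/-- for `X` locally compact Hausdorff, `φ(K) = id_{X\K}` is a
semilattice isomorphism from `(CL(X), ∪)` onto the idempotents of `Γ(X)` which
is a homeomorphism from the Fell topology onto `E(Γ(X))` with the topology
`τ_hco`; consequently `E(Γ(X))` is `τ_hco`-compact. -/
theorem stmt14 {X : Type*} [TopologicalSpace X] [T2Space X] [LocallyCompactSpace X] :
    (∀ A B : Cl X, phiId (⟨A.1 ∪ B.1, A.2.union B.2⟩ : Cl X) =
      (phiId A).comp (phiId B)) ∧
    Function.Injective (phiId (X := X)) ∧
    Set.range (phiId (X := X)) = {f : PGamma X | f.comp f = f} ∧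
    @Topology.IsEmbedding (Cl X) (PGamma X) (fellTop X) (thcoTop X) phiId ∧
    @IsCompact (PGamma X) (thcoTop X) {f : PGamma X | f.comp f = f} :=
  stmt14_general
end

section
/- If E is a topological semilattice with small semilattices (every point has a neighborhood basis of subsemilattices), then the map π: P_fin(E) → E sending a nonempty finite subset {x₁,…,xₙ} to the product x₁⋯xₙ is continuous, where P_fin(E) carries the Vietoris topology. -/
/-- The nonempty finite subsets of `E`. -/
abbrev PFin (E : Type*) := {A : Set E // A.Finite ∧ A.Nonempty}

/-- The Vietoris topology on the nonempty finite subsets of `E`, with subbasic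
sets `{A : A ⊆ U}` and `{A : A ∩ U ≠ ∅}` for `U` open. -/
instance vietorisPFin (E : Type*) [TopologicalSpace E] : TopologicalSpace (PFin E) :=
  .generateFrom {s | ∃ U : Set E, IsOpen U ∧
    (s = {A : PFin E | A.1 ⊆ U} ∨ s = {A : PFin E | (A.1 ∩ U).Nonempty})}

namespace Stmt15Aux
set_option linter.unusedSectionVars false
variable {E : Type*} [Semigroup E]

theorem pi_eq (π : PFin E → E) {S T : Set E} (h : S = T) {hf hn} :
    π ⟨S, hf, hn⟩ = π ⟨T, h ▸ hf, h ▸ hn⟩ := by subst h; rfl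

/-- π applied to the coercion of a nonempty finset. -/
def piF (π : PFin E → E) (t : Finset E) (ht : t.Nonempty) : E :=
  π ⟨↑t, t.finite_toSet, Finset.coe_nonempty.mpr ht⟩

theorem piF_congr (π : PFin E → E) {t u : Finset E} (h : t = u) {ht} :
    piF π t ht = piF π u (h ▸ ht) := by subst h; rfl

variable (π : PFin E → E)
    (hsingle : ∀ x : E, π ⟨{x}, Set.finite_singleton x, Set.singleton_nonempty x⟩ = x)
    (hunion : ∀ A B : PFin E,
      π ⟨A.1 ∪ B.1, A.2.1.union B.2.1, A.2.2.inl⟩ = π A * π B)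

include hsingle hunion

theorem piF_singleton (a : E) {h} : piF π {a} h = a := by
  refine Eq.trans (pi_eq π (Finset.coe_singleton a)
    (hf := ({a} : Finset E).finite_toSet) (hn := Finset.coe_nonempty.mpr h)) ?_
  exact hsingle a

theorem piF_union [DecidableEq E] (t u : Finset E) (ht : t.Nonempty) (hu : u.Nonempty)
    {h} : piF π (t ∪ u) h = piF π t ht * piF π u hu := by
  refine Eq.trans (pi_eq π (Finset.coe_union t u)
    (hf := (t ∪ u).finite_toSet) (hn := Finset.coe_nonempty.mpr h)) ?_
  exact hunion ⟨↑t, t.finite_toSet, Finset.coe_nonempty.mpr ht⟩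
    ⟨↑u, u.finite_toSet, Finset.coe_nonempty.mpr hu⟩

theorem piF_insert [DecidableEq E] (a : E) (t : Finset E) (ht : t.Nonempty) {h} :
    piF π (insert a t) h = a * piF π t ht := by
  rw [piF_congr π (Finset.insert_eq a t),
    piF_union π hsingle hunion {a} t (Finset.singleton_nonempty a) ht,
    piF_singleton π hsingle hunion]

theorem piF_mem (S : Set E) (hS : ∀ a ∈ S, ∀ b ∈ S, a * b ∈ S) :
    ∀ (t : Finset E) (ht : t.Nonempty), ↑t ⊆ S → piF π t ht ∈ S := by
  classical
  intro t ht
  induction ht using Finset.Nonempty.cons_induction with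
  | singleton a =>
    intro hsub
    rw [piF_singleton π hsingle hunion]
    exact hsub (by simp)
  | cons a s hma hs ih =>
    intro hsub
    rw [piF_congr π (Finset.cons_eq_insert a s hma),
      piF_insert π hsingle hunion a s hs]
    exact hS a (hsub (by simp)) _ (ih (fun x hx => hsub (by simp [hx])))

theorem piF_biUnion [DecidableEq E] :
    ∀ (t : Finset E) (ht : t.Nonempty) (B : E → Finset E)
    (hB : ∀ x ∈ t, (B x).Nonempty) (y : E → E),
    (∀ x ∈ t, ∀ h, y x = piF π (B x) h) →
    ∀ (h1 : (t.biUnion B).Nonempty) (h2 : (t.image y).Nonempty),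
    piF π (t.biUnion B) h1 = piF π (t.image y) h2 := by
  intro t ht
  induction ht using Finset.Nonempty.cons_induction with
  | singleton a =>
    intro B hB y hy h1 h2
    rw [piF_congr π (show ({a} : Finset E).biUnion B = B a by simp),
      piF_congr π (show ({a} : Finset E).image y = {y a} by simp),
      piF_singleton π hsingle hunion]
    exact (hy a (by simp) (hB a (by simp))).symm
  | cons a s hma hs ih =>
    intro B hB y hy h1 h2
    have hBs : (s.biUnion B).Nonempty := by
      obtain ⟨b, hb⟩ := hs
      obtain ⟨c, hc⟩ := hB b (by simp [hb])
      exact ⟨c, Finset.mem_biUnion.mpr ⟨b, hb, hc⟩⟩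
    have e1 : (Finset.cons a s hma).biUnion B = B a ∪ s.biUnion B := by
      rw [Finset.cons_eq_insert, Finset.biUnion_insert]
    have e2 : (Finset.cons a s hma).image y = insert (y a) (s.image y) := by
      rw [Finset.cons_eq_insert, Finset.image_insert]
    rw [piF_congr π e1,
      piF_union π hsingle hunion _ _ (hB a (by simp)) hBs,
      piF_congr π e2,
      piF_insert π hsingle hunion _ _ (hs.image y),
      ih B (fun x hx => hB x (by simp [hx])) y (fun x hx => hy x (by simp [hx]))
        hBs (hs.image y),
      hy a (by simp) (hB a (by simp))]

omit hsingle hunion in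
theorem piF_pi (F : PFin E) {h} : piF π F.2.1.toFinset h = π F :=
  pi_eq π F.2.1.coe_toFinset (hf := F.2.1.toFinset.finite_toSet)
    (hn := Finset.coe_nonempty.mpr h)

end Stmt15Aux

namespace Stmt15Aux
variable {E : Type*} [Semigroup E]
variable (π : PFin E → E)
    (hsingle : ∀ x : E, π ⟨{x}, Set.finite_singleton x, Set.singleton_nonempty x⟩ = x)
    (hunion : ∀ A B : PFin E,
      π ⟨A.1 ∪ B.1, A.2.1.union B.2.1, A.2.2.inl⟩ = π A * π B)
include hsingle hunion

theorem piF_cont [TopologicalSpace E] [DecidableEq E]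
    (hcont : Continuous fun p : E × E => p.1 * p.2) :
    ∀ (t : Finset E) (ht : t.Nonempty) (W : Set E), IsOpen W → piF π t ht ∈ W →
    ∃ V : E → Set E, (∀ x ∈ t, V x ∈ nhds x) ∧
      ∀ y : E → E, (∀ x ∈ t, y x ∈ V x) → ∀ h2, piF π (t.image y) h2 ∈ W := by
  intro t ht
  induction ht using Finset.Nonempty.cons_induction with
  | singleton a =>
    intro W hW hmem
    rw [piF_singleton π hsingle hunion] at hmem
    refine ⟨fun _ => W, fun x hx => hW.mem_nhds (by simp_all), ?_⟩
    intro y hy h2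
    rw [piF_congr π (show ({a} : Finset E).image y = {y a} by simp),
      piF_singleton π hsingle hunion]
    exact hy a (by simp)
  | cons a s hma hs ih =>
    intro W hW hmem
    rw [piF_congr π (Finset.cons_eq_insert a s hma),
      piF_insert π hsingle hunion a s hs] at hmem
    have hc : ContinuousAt (fun p : E × E => p.1 * p.2) (a, piF π s hs) :=
      hcont.continuousAt
    have hpre : (fun p : E × E => p.1 * p.2) ⁻¹' W ∈ nhds (a, piF π s hs) :=
      hc (hW.mem_nhds hmem)
    obtain ⟨u, hu, v, hv, huv⟩ := mem_nhds_prod_iff.1 hpre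
    have hvint : piF π s hs ∈ interior v := mem_interior_iff_mem_nhds.2 hv
    obtain ⟨V, hV1, hV2⟩ := ih (interior v) isOpen_interior hvint
    refine ⟨fun x => if x = a then u else V x, ?_, ?_⟩
    · intro x hx
      rcases Finset.mem_cons.1 hx with rfl | hx
      · simpa using hu
      · have hxa : x ≠ a := fun h => hma (h ▸ hx)
        simpa [hxa] using hV1 x hx
    · intro y hy h2
      have hya : y a ∈ u := by simpa using hy a (by simp)
      have hys : piF π (s.image y) (hs.image y) ∈ interior v := by
        apply hV2
        intro x hx
        have hxa : x ≠ a := fun h => hma (h ▸ hx)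
        simpa [hxa] using hy x (by simp [hx])
      have e2 : (Finset.cons a s hma).image y = insert (y a) (s.image y) := by
        rw [Finset.cons_eq_insert, Finset.image_insert]
      rw [piF_congr π e2, piF_insert π hsingle hunion _ _ (hs.image y)]
      exact huv (Set.mk_mem_prod hya (interior_subset hys))

end Stmt15Aux

open Stmt15Aux in
/-- if `E` is a topological semilattice (a Hausdorff space with a
continuous, commutative, associative, idempotent multiplication) with small
semilattices, then the map `π : P_fin(E) → E` sending a nonempty finite subset
to the product of its elements (characterized by `π {x} = x` and
`π (A ∪ B) = π A * π B`) is continuous for the Vietoris topology. -/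
theorem stmt15 {E : Type*} [TopologicalSpace E] [T2Space E] [Semigroup E]
    (hcomm : ∀ a b : E, a * b = b * a)
    (hidem : ∀ a : E, a * a = a)
    (hcont : Continuous fun p : E × E => p.1 * p.2)
    (hsmall : ∀ x : E, ∀ U ∈ nhds x, ∃ V ∈ nhds x, V ⊆ U ∧
      ∀ a ∈ V, ∀ b ∈ V, a * b ∈ V)
    (π : PFin E → E)
    (hsingle : ∀ x : E, π ⟨{x}, Set.finite_singleton x, Set.singleton_nonempty x⟩ = x)
    (hunion : ∀ A B : PFin E,
      π ⟨A.1 ∪ B.1, A.2.1.union B.2.1, A.2.2.inl⟩ = π A * π B) :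
    Continuous π := by
  classical
  rw [continuous_def]
  intro W hW
  rw [isOpen_iff_mem_nhds]
  intro A hA
  set t := A.2.1.toFinset with htdef
  have htA : (↑t : Set E) = A.1 := A.2.1.coe_toFinset
  have htne : t.Nonempty := by
    rw [← Finset.coe_nonempty, htA]; exact A.2.2
  have hmem : piF π t htne ∈ W := by rw [piF_pi π A]; exact hA
  obtain ⟨V, hV1, hV2⟩ := piF_cont π hsingle hunion hcont t htne W hW hmem
  have hVnhds : ∀ x, (if x ∈ t then V x else Set.univ) ∈ nhds x := by
    intro x
    split_ifs with h
    · exact hV1 x h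
    · exact Filter.univ_mem
  choose S hSmem hSsub hSmul using fun x => hsmall x _ (hVnhds x)
  set N : Set (PFin E) := {F : PFin E | F.1 ⊆ ⋃ x ∈ t, interior (S x)} ∩
    ⋂ x ∈ t, {F : PFin E | (F.1 ∩ interior (S x)).Nonempty} with hNdef
  rw [mem_nhds_iff]
  refine ⟨N, ?_, ?_, ?_, ?_⟩
  · -- N ⊆ π ⁻¹' W
    rintro F ⟨hFsub, hFint⟩
    have hFx : ∀ x ∈ t, (F.1 ∩ interior (S x)).Nonempty :=
      fun x hx => Set.mem_iInter₂.1 hFint x hx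
    have hFt : F.2.1.toFinset.Nonempty := by
      rw [← Finset.coe_nonempty, F.2.1.coe_toFinset]; exact F.2.2
    set FB : E → Finset E := fun x => (F.2.1.inter_of_left (S x)).toFinset with hFBdef
    have hBcoe : ∀ x, (↑(FB x) : Set E) = F.1 ∩ S x :=
      fun x => (F.2.1.inter_of_left (S x)).coe_toFinset
    have hBne : ∀ x ∈ t, (FB x).Nonempty := by
      intro x hx
      rw [← Finset.coe_nonempty, hBcoe]
      exact (hFx x hx).mono (Set.inter_subset_inter_right _ interior_subset)
    set y : E → E := fun x => if hx : (FB x).Nonempty then piF π (FB x) hx else π F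
      with hydef
    have hy : ∀ x ∈ t, ∀ h, y x = piF π (FB x) h := by
      intro x hx h
      simp only [hydef, dif_pos h]
    have hFeq : F.2.1.toFinset = t.biUnion FB := by
      apply Finset.coe_injective
      rw [F.2.1.coe_toFinset, Finset.coe_biUnion]
      ext a
      constructor
      · intro ha
        obtain ⟨x, hx1, hx2⟩ := Set.mem_iUnion₂.1 (hFsub ha)
        refine Set.mem_iUnion₂.2 ⟨x, ?_, ?_⟩
        · exact_mod_cast hx1
        · rw [hBcoe]
          exact ⟨ha, interior_subset hx2⟩
      · intro ha
        obtain ⟨x, _, hx2⟩ := Set.mem_iUnion₂.1 ha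
        rw [hBcoe] at hx2
        exact hx2.1
    show π F ∈ W
    rw [← piF_pi π F (h := hFt), piF_congr π hFeq,
      piF_biUnion π hsingle hunion t htne FB hBne y hy (hFeq ▸ hFt) (htne.image y)]
    apply hV2 y _ (htne.image y)
    intro x hx
    have hyS : y x ∈ S x := by
      rw [hy x hx (hBne x hx)]
      apply piF_mem π hsingle hunion (S x) (hSmul x) (FB x) (hBne x hx)
      rw [hBcoe]
      exact Set.inter_subset_right
    have hsub := hSsub x
    rw [if_pos hx] at hsub
    exact hsub hyS
  · -- IsOpen N
    apply IsOpen.inter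
    · exact TopologicalSpace.isOpen_generateFrom_of_mem
        ⟨⋃ x ∈ t, interior (S x),
          isOpen_biUnion fun x _ => isOpen_interior, Or.inl rfl⟩
    · exact isOpen_biInter_finset fun x hx =>
        TopologicalSpace.isOpen_generateFrom_of_mem
          ⟨interior (S x), isOpen_interior, Or.inr rfl⟩
  · -- A ∈ N, first part
    intro a ha
    have hat : a ∈ t := by
      rw [← htA] at ha; exact_mod_cast ha
    exact Set.mem_biUnion hat (mem_interior_iff_mem_nhds.2 (hSmem a))
  · -- A ∈ N, second part
    refine Set.mem_iInter₂.2 fun x hx => ⟨x, ?_, mem_interior_iff_mem_nhds.2 (hSmem x)⟩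
    rw [← htA]
    exact_mod_cast hx
end

section
/- Let G be a topological group and S a topological inverse semigroup whose idempotent semilattice E(S) has small semilattices. If θ: G → S is a continuous unital premorphism, then the associated homomorphism θ̃: G̃^R → S defined by θ̃({1,g₁,…,gₙ}, gₙ) = θ(g₁)θ(g₁)⁻¹ ⋯ θ(g_{n-1})θ(g_{n-1})⁻¹ θ(gₙ) is continuous, where G̃^R carries the topology inherited from K(G) × G with K(G) having the Vietoris topology. -/
/-- The hyperspace of compact subsets of `G`. -/
abbrev KSet (G : Type*) [TopologicalSpace G] := {A : Set G // IsCompact A}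

/-- The Vietoris topology on `K(G)`. -/
instance vietorisK (G : Type*) [TopologicalSpace G] : TopologicalSpace (KSet G) :=
  .generateFrom {s | ∃ U : Set G, IsOpen U ∧
    (s = {A : KSet G | A.1 ⊆ U} ∨ s = {A : KSet G | (A.1 ∩ U).Nonempty})}

/-- The Birget–Rhodes expansion `G̃^R` as a subspace of `K(G) × G`:
pairs `(A,g)` with `A` finite and `{1,g} ⊆ A`. -/
abbrev BRtop (G : Type*) [Group G] [TopologicalSpace G] :=
  {p : KSet G × G // p.1.1.Finite ∧ (1 : G) ∈ p.1.1 ∧ p.2 ∈ p.1.1}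

open Filter Topology Set

def HasSmallSemilattices (S : Type*) [Mul S] [TopologicalSpace S] : Prop :=
  ∀ e : S, e * e = e → ∀ U ∈ 𝓝 e, ∃ V ∈ 𝓝 e,
    (V ∩ {x : S | x * x = x} ⊆ U) ∧
    ∀ a ∈ V ∩ {x : S | x * x = x}, ∀ b ∈ V ∩ {x : S | x * x = x},
      a * b ∈ V ∩ {x : S | x * x = x}

theorem InverseMonoid.isIdempotentElem_mul_inv {S : Type*} [InverseMonoid S] (a : S) :
    IsIdempotentElem (a * a⁻¹) := by
  rw [IsIdempotentElem, ← mul_assoc, InverseMonoid.mul_inv_mul]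

theorem HasSmallSemilattices.exists_nhds_list_prod_mem {S : Type*} [Monoid S]
    [TopologicalSpace S] (hS : HasSmallSemilattices S) {e : S} (he : IsIdempotentElem e)
    {U : Set S} (hU : U ∈ 𝓝 e) :
    ∃ V ∈ 𝓝 e, ∀ l : List S, l ≠ [] → (∀ x ∈ l, x ∈ V ∧ IsIdempotentElem x) → l.prod ∈ U := by
  obtain ⟨V, hV, hVU, hVmul⟩ := hS e he U hU
  exact ⟨V, hV, fun l hl hlV =>
    hVU (List.prod_induction_nonempty _ (fun a b ha hb => hVmul a ha b hb) hl hlV)⟩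

theorem exists_nhds_forall_list_prod_mem {M ι : Type*} [Monoid M] [TopologicalSpace M]
    [ContinuousMul M] (l : List ι) (x : ι → M) {W : Set M} (hW : W ∈ 𝓝 (l.map x).prod) :
    ∃ t : ι → Set M, (∀ i, t i ∈ 𝓝 (x i)) ∧
      ∀ y : ι → M, (∀ i ∈ l, y i ∈ t i) → (l.map y).prod ∈ W := by
  classical
  have hcont : Continuous fun y : ι → M => (l.map y).prod :=
    continuous_list_prod l fun i _ => continuous_apply i
  have hnhds := hcont.continuousAt hW
  rw [nhds_pi, Filter.mem_map, Filter.mem_pi] at hnhds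
  obtain ⟨I, -, t, ht, hIt⟩ := hnhds
  refine ⟨t, ht, fun y hy => ?_⟩
  let y' : ι → M := fun i => if i ∈ l then y i else x i
  have hy' : y' ∈ I.pi t := fun i _ => by
    by_cases hi : i ∈ l
    · simpa [y', hi] using hy i hi
    · simpa [y', hi] using mem_of_mem_nhds (ht i)
  have hl : l.map y' = l.map y := List.map_congr_left fun i hi => if_pos hi
  simpa [hl] using hIt hy'

theorem KSet.isOpen_setOf_subset {X : Type*} [TopologicalSpace X] {U : Set X} (hU : IsOpen U) :
    IsOpen {A : KSet X | A.1 ⊆ U} :=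
  TopologicalSpace.isOpen_generateFrom_of_mem ⟨U, hU, Or.inl rfl⟩

theorem KSet.isOpen_setOf_inter_nonempty {X : Type*} [TopologicalSpace X] {U : Set X}
    (hU : IsOpen U) : IsOpen {A : KSet X | (A.1 ∩ U).Nonempty} :=
  TopologicalSpace.isOpen_generateFrom_of_mem ⟨U, hU, Or.inr rfl⟩

theorem Set.Finite.exists_flatMap_of_subset_biUnion {α ι : Type*} {B : Set α} (hB : B.Finite)
    {l₀ : List ι} {U : ι → Set α} (hcov : B ⊆ ⋃ i ∈ l₀, U i) :
    ∃ L : ι → List α, (∀ x, x ∈ l₀.flatMap L ↔ x ∈ B) ∧ ∀ i x, x ∈ L i ↔ x ∈ B ∩ U i := by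
  classical
  refine ⟨fun i => hB.toFinset.toList.filter (· ∈ U i), ?_, fun i x => by simp⟩
  intro x
  simp only [List.mem_flatMap, List.mem_filter, Finset.mem_toList, Finite.mem_toFinset,
    decide_eq_true_eq]
  exact ⟨fun ⟨_, _, hx, _⟩ => hx, fun hx => by
    obtain ⟨i, hi, hxi⟩ := mem_iUnion₂.1 (hcov hx)
    exact ⟨i, hi, hx, hxi⟩⟩

theorem KSet.eventually_exists_list_prod_mem {X S : Type*} [TopologicalSpace X] [Monoid S]
    [TopologicalSpace S] [ContinuousMul S] (hS : HasSmallSemilattices S) {f : X → S}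
    (hf : Continuous f) (hfe : ∀ x, IsIdempotentElem (f x)) {A : KSet X} {l₀ : List X}
    (hl₀ : ∀ x, x ∈ l₀ ↔ x ∈ A.1) {W : Set S} (hW : W ∈ 𝓝 (l₀.map f).prod) :
    ∀ᶠ B in 𝓝 A, B.1.Finite → ∃ l : List X, (∀ x, x ∈ l ↔ x ∈ B.1) ∧ (l.map f).prod ∈ W := by
  obtain ⟨t, ht, hprod⟩ := exists_nhds_forall_list_prod_mem l₀ f hW
  choose V hV hVprod using fun a => hS.exists_nhds_list_prod_mem (hfe a) (ht a)
  set U : X → Set X := fun a => interior (f ⁻¹' V a)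
  have hU : ∀ a, a ∈ U a := fun a => mem_interior_iff_mem_nhds.2 (hf.continuousAt (hV a))
  have hcover : ∀ᶠ B in 𝓝 A, B.1 ⊆ ⋃ a ∈ l₀, U a :=
    (KSet.isOpen_setOf_subset (isOpen_biUnion fun a _ => isOpen_interior)).eventually_mem
      fun x hx => mem_biUnion ((hl₀ x).2 hx) (hU x)
  have hmeet : ∀ᶠ B in 𝓝 A, ∀ a ∈ l₀, (B.1 ∩ U a).Nonempty :=
    (eventually_all_finite l₀.finite_toSet).2 fun a ha =>
      (KSet.isOpen_setOf_inter_nonempty isOpen_interior).eventually_mem ⟨a, (hl₀ a).1 ha, hU a⟩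
  filter_upwards [hcover, hmeet] with B hBcover hBmeet hBfin
  obtain ⟨L, hLB, hL⟩ := hBfin.exists_flatMap_of_subset_biUnion hBcover
  refine ⟨l₀.flatMap L, hLB, ?_⟩
  rw [List.flatMap_def, List.map_flatten, List.prod_flatten, List.map_map, List.map_map]
  refine hprod (fun a => ((L a).map f).prod) fun a ha => hVprod a _ ?_ ?_
  · obtain ⟨b, hb⟩ := hBmeet a ha
    exact mt List.map_eq_nil_iff.1 (List.ne_nil_of_mem ((hL a b).2 hb))
  · simp only [List.mem_map]
    rintro _ ⟨b, hb, rfl⟩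
    exact ⟨interior_subset (s := f ⁻¹' V a) ((hL a b).1 hb).2, hfe b⟩

theorem stmt16_general {G S : Type*} [Group G] [TopologicalSpace G]
    [InverseMonoid S] [TopologicalSpace S]
    (hmulc : Continuous fun p : S × S => p.1 * p.2)
    (hinvc : Continuous fun s : S => s⁻¹)
    (hsmall : ∀ e : S, e * e = e → ∀ U ∈ nhds e, ∃ V ∈ nhds e,
      (V ∩ {x : S | x * x = x} ⊆ U) ∧
      ∀ a ∈ V ∩ {x : S | x * x = x}, ∀ b ∈ V ∩ {x : S | x * x = x},
        a * b ∈ V ∩ {x : S | x * x = x})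
    (θ : G → S) (hθc : Continuous θ)
    (Θ : BRtop G → S)
    (hΘ : ∀ (q : BRtop G) (l : List G), (∀ x : G, x ∈ l ↔ x ∈ q.1.1.1) →
      Θ q = (l.map fun a => θ a * (θ a)⁻¹).prod * θ q.1.2) :
    Continuous Θ := by
  have : ContinuousMul S := ⟨hmulc⟩
  have hf : Continuous fun a => θ a * (θ a)⁻¹ := hθc.mul (hinvc.comp hθc)
  refine continuous_iff_continuousAt.2 fun q => ?_
  obtain ⟨l₀, hl₀⟩ : ∃ l₀ : List G, ∀ x, x ∈ l₀ ↔ x ∈ q.1.1.1 :=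
    ⟨q.2.1.toFinset.toList, fun x => by simp⟩
  rw [ContinuousAt, hΘ q l₀ hl₀]
  refine fun W hW => Filter.mem_map.2 ?_
  obtain ⟨W₁, hW₁, W₂, hW₂, hW₁₂⟩ := Filter.mem_mul.1 (le_nhds_mul _ _ hW)
  have hprod := (continuous_fst.comp continuous_subtype_val).continuousAt.eventually
    (KSet.eventually_exists_list_prod_mem hsmall hf
      (fun a => InverseMonoid.isIdempotentElem_mul_inv (θ a)) hl₀ hW₁)
  have hθ : ∀ᶠ p in 𝓝 q, θ p.1.2 ∈ W₂ :=
    (hθc.comp (continuous_snd.comp continuous_subtype_val)).continuousAt hW₂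
  filter_upwards [hprod, hθ] with p hp hpθ
  obtain ⟨l, hl, hlW⟩ := hp p.2.1
  rw [Set.mem_preimage, hΘ p l hl]
  exact hW₁₂ (Set.mul_mem_mul hlW hpθ)

/-- for a topological group `G` and a topological inverse semigroup
`S` whose idempotent semilattice has small semilattices, if `θ : G → S` is a
continuous unital premorphism then the associated homomorphism
`θ̃(A,g) = (∏_{a ∈ A} θ(a)θ(a)⁻¹) · θ(g)` on `G̃^R ⊆ K(G) × G` is continuous
(the product formula being expressed via any enumeration of `A`). -/
theorem stmt16 {G S : Type*} [Group G] [TopologicalSpace G] [IsTopologicalGroup G]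
    [InverseMonoid S] [TopologicalSpace S]
    (hmulc : Continuous fun p : S × S => p.1 * p.2)
    (hinvc : Continuous fun s : S => s⁻¹)
    (hsmall : ∀ e : S, e * e = e → ∀ U ∈ nhds e, ∃ V ∈ nhds e,
      (V ∩ {x : S | x * x = x} ⊆ U) ∧
      ∀ a ∈ V ∩ {x : S | x * x = x}, ∀ b ∈ V ∩ {x : S | x * x = x},
        a * b ∈ V ∩ {x : S | x * x = x})
    (θ : G → S) (hθ : IsUnitalPremorphism θ) (hθc : Continuous θ)
    (Θ : BRtop G → S)
    (hΘ : ∀ (q : BRtop G) (l : List G), (∀ x : G, x ∈ l ↔ x ∈ q.1.1.1) →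
      Θ q = (l.map fun a => θ a * (θ a)⁻¹).prod * θ q.1.2) :
    Continuous Θ :=
  stmt16_general hmulc hinvc hsmall θ hθc Θ hΘ
end
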